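/- Let Ĥ be a complex Hilbert space with a skew-adjoint unitary J defining the symplectic form ω(ξ,η) = ⟨Jξ,η⟩, let Γ be a closed isotropic subspace of Ĥ, and set β = Γ^ω ∩ Γ^⊥ (a J-invariant closed subspace of Ĥ); note that the orthogonal complement of Γ^ω in Ĥ equals JΓ. Let N be a Lagrangian subspace of the symplectic space β, so that the orthogonal complement of N in β equals JN, and Ĥ decomposes orthogonally as (N ⊕ JΓ) ⊕ (JN ⊕ Γ). Then a closed subspace M ⊆ Ĥ is a Lagrangian subspace of Ĥ transversal to (Γ, Γ^ω) (i.e. M + Γ is closed, M ∩ Γ = 0, M + Γ^ω = Ĥ) with γ_!M = N if and only if M is the graph {v + μ(v) : v ∈ N ⊕ JΓ} of a (necessarily unique) bounded linear operator μ : N ⊕ JΓ → JN ⊕ Γ such that the bounded operator ψ on JN ⊕ Γ defined by ψ(w) = μ(Jw) is self-adjoint and satisfies P_{JN}(ψ(w)) = 0 for all w ∈ JN. Consequently, the set S_N of such subspaces M is in canonical bijection with the Banach space B^{sa}(Γ) ⊕ B(JN, Γ) (self-adjoint bounded operators on Γ and bounded operators from JN to Γ), with the zero element corresponding to M = N ⊕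 JΓ. -/

import Mathlib

noncomputable section

open Classical in
/-- Orthogonal projection onto a closed (complete) submodule, as a continuous linear map
on the ambient space (defined to be `0` on non-complete submodules). -/
noncomputable def orthProj {W : Type*} [NormedAddCommGroup W] [InnerProductSpace ℂ W]
    (M : Submodule ℂ W) : W →L[ℂ] W :=
  if h : IsComplete (M : Set W) then
    haveI : CompleteSpace M := h.completeSpace_coe
    M.subtypeL.comp (M.orthogonalProjectionOnto)
  else 0

/-- The push-forward `γ_!M = γ(M ∩ Γ')`, where `β = Γ' ∩ Γ^⊥` and `γ` is the restriction
to `Γ'` of the orthogonal projection onto `β`. -/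
def gammaPush {W : Type*} [NormedAddCommGroup W] [InnerProductSpace ℂ W]
    (Γ Γ' M : Submodule ℂ W) : Submodule ℂ W :=
  (M ⊓ Γ').map (orthProj (Γ' ⊓ Γᗮ)).toLinearMap

/-- `M` is transversal to `(Γ, Γ')`: `M + Γ` is closed, `M ∩ Γ = 0` and `M + Γ' = W`. -/
def TransversalWrt {W : Type*} [NormedAddCommGroup W] [InnerProductSpace ℂ W]
    (Γ Γ' M : Submodule ℂ W) : Prop :=
  IsClosed ((M ⊔ Γ : Submodule ℂ W) : Set W) ∧ M ⊓ Γ = ⊥ ∧ M ⊔ Γ' = ⊤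

section Aux

variable {W : Type*} [NormedAddCommGroup W] [InnerProductSpace ℂ W] [CompleteSpace W]

local notation "⟪" x ", " y "⟫" => @inner ℂ _ _ x y

theorem orthProj_spec (Q : Submodule ℂ W) (hQ : IsClosed (Q : Set W)) (x : W) :
    orthProj Q x ∈ Q ∧ x - orthProj Q x ∈ Qᗮ := by
  have h : IsComplete (Q : Set W) := hQ.isComplete
  haveI : CompleteSpace Q := h.completeSpace_coe
  simp only [orthProj, dif_pos h]
  exact ⟨(Q.orthogonalProjectionOnto x).2, Submodule.sub_starProjection_mem_orthogonal (K := Q) x⟩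

theorem orthProj_mem (Q : Submodule ℂ W) (hQ : IsClosed (Q : Set W)) (x : W) :
    orthProj Q x ∈ Q := (orthProj_spec Q hQ x).1

theorem sub_orthProj_mem (Q : Submodule ℂ W) (hQ : IsClosed (Q : Set W)) (x : W) :
    x - orthProj Q x ∈ Qᗮ := (orthProj_spec Q hQ x).2

theorem orthProj_eq_self (Q : Submodule ℂ W) (hQ : IsClosed (Q : Set W)) {x : W}
    (hx : x ∈ Q) : orthProj Q x = x := by
  have h1 := sub_orthProj_mem Q hQ x
  have h2 : x - orthProj Q x ∈ Q := Q.sub_mem hx (orthProj_mem Q hQ x)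
  have : x - orthProj Q x ∈ Q ⊓ Qᗮ := ⟨h2, h1⟩
  rw [Q.inf_orthogonal_eq_bot] at this
  have := (Submodule.mem_bot ℂ).mp this
  linear_combination (norm := abel) -this

theorem orthProj_eq_zero (Q : Submodule ℂ W) (hQ : IsClosed (Q : Set W)) {x : W}
    (hx : x ∈ Qᗮ) : orthProj Q x = 0 := by
  have h1 := sub_orthProj_mem Q hQ x
  have h2 : orthProj Q x ∈ Qᗮ := by
    have : orthProj Q x = x - (x - orthProj Q x) := by abel
    rw [this]; exact Qᗮ.sub_mem hx h1
  have : orthProj Q x ∈ Q ⊓ Qᗮ := ⟨orthProj_mem Q hQ x, h2⟩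
  rw [Q.inf_orthogonal_eq_bot] at this
  exact (Submodule.mem_bot ℂ).mp this

theorem orthProj_add_of_mem {U V : Submodule ℂ W} (hU : IsClosed (U : Set W))
    (hUV : V ≤ Uᗮ) {u v : W} (hu : u ∈ U) (hv : v ∈ V) :
    orthProj U (u + v) = u := by
  rw [map_add, orthProj_eq_self U hU hu, orthProj_eq_zero U hU (hUV hv), add_zero]

theorem orthProj_orthogonal_eq (Q : Submodule ℂ W) (hQ : IsClosed (Q : Set W)) (x : W) :
    orthProj Qᗮ x = x - orthProj Q x := by
  have h1 : x = orthProj Q x + (x - orthProj Q x) := by abel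
  have h2 : orthProj Q x ∈ Qᗮᗮ := Q.le_orthogonal_orthogonal (orthProj_mem Q hQ x)
  calc orthProj Qᗮ x = orthProj Qᗮ (orthProj Q x) + orthProj Qᗮ (x - orthProj Q x) := by
        rw [← map_add]; exact congrArg _ (by abel)
    _ = x - orthProj Q x := by
        rw [orthProj_eq_zero Qᗮ Q.isClosed_orthogonal h2,
          orthProj_eq_self Qᗮ Q.isClosed_orthogonal (sub_orthProj_mem Q hQ x), zero_add]

theorem orthProj_add_orthProj_orthogonal (Q : Submodule ℂ W) (hQ : IsClosed (Q : Set W))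
    (x : W) : orthProj Q x + orthProj Qᗮ x = x := by
  rw [orthProj_orthogonal_eq Q hQ]; abel

theorem isClosed_range_add3 (V G : Submodule ℂ W) (hV : IsClosed (V : Set W))
    (hG : IsClosed (G : Set W)) (f : V →L[ℂ] W)
    (h1 : ∀ v : V, ⟪(v : W), f v⟫ = 0)
    (h2 : ∀ (v : V) (g : G), ⟪(v : W), (g : W)⟫ = 0)
    (h3 : ∀ (v : V) (g : G), ⟪f v, (g : W)⟫ = 0) :
    IsClosed (Set.range fun p : V × G => (p.1 : W) + f p.1 + (p.2 : W)) := by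
  haveI : CompleteSpace V := hV.completeSpace_coe
  haveI : CompleteSpace G := hG.completeSpace_coe
  let F : (V × G) →L[ℂ] W :=
    (V.subtypeL + f).comp (ContinuousLinearMap.fst ℂ V G) +
      G.subtypeL.comp (ContinuousLinearMap.snd ℂ V G)
  have hFapp : ∀ p : V × G, F p = (p.1 : W) + f p.1 + (p.2 : W) := fun p => rfl
  have hbound : ∀ p : V × G, ‖p‖ ≤ 1 * ‖F p‖ := by
    intro p
    rw [one_mul, hFapp]
    have e1 : ‖(p.1 : W) + f p.1 + (p.2 : W)‖ ^ 2
        = ‖(p.1 : W)‖ ^ 2 + ‖f p.1 + (p.2 : W)‖ ^ 2 := by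
      rw [add_assoc, norm_add_sq (𝕜 := ℂ)]
      have : ⟪(p.1 : W), f p.1 + (p.2 : W)⟫ = 0 := by
        rw [inner_add_right, h1, h2, add_zero]
      rw [this]; simp
    have e2 : ‖f p.1 + (p.2 : W)‖ ^ 2 = ‖f p.1‖ ^ 2 + ‖(p.2 : W)‖ ^ 2 := by
      rw [norm_add_sq (𝕜 := ℂ), h3]; simp
    have hn1 : ‖p.1‖ = ‖(p.1 : W)‖ := rfl
    have hn2 : ‖p.2‖ = ‖(p.2 : W)‖ := rfl
    rw [Prod.norm_def]
    apply max_le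
    · rw [hn1]
      nlinarith [norm_nonneg ((p.1 : W) + f p.1 + (p.2 : W)), norm_nonneg (p.1 : W),
        norm_nonneg (f p.1), norm_nonneg (p.2 : W)]
    · rw [hn2]
      nlinarith [norm_nonneg ((p.1 : W) + f p.1 + (p.2 : W)), norm_nonneg (p.1 : W),
        norm_nonneg (f p.1), norm_nonneg (p.2 : W)]
  have hanti : AntilipschitzWith 1 F := F.antilipschitz_of_bound hbound
  have := hanti.isClosed_range F.uniformContinuous
  convert this using 1
  exact congrArg Set.range (funext fun p => (hFapp p).symm)

theorem isClosed_range_graph (V : Submodule ℂ W) (hV : IsClosed (V : Set W))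
    (f : V →L[ℂ] W) (h1 : ∀ v : V, ⟪(v : W), f v⟫ = 0) :
    IsClosed (Set.range fun v : V => (v : W) + f v) := by
  haveI : CompleteSpace V := hV.completeSpace_coe
  let F : V →L[ℂ] W := V.subtypeL + f
  have hFapp : ∀ v : V, F v = (v : W) + f v := fun v => rfl
  have hbound : ∀ v : V, ‖v‖ ≤ 1 * ‖F v‖ := by
    intro v
    rw [one_mul, hFapp]
    have e1 : ‖(v : W) + f v‖ ^ 2 = ‖(v : W)‖ ^ 2 + ‖f v‖ ^ 2 := by
      rw [norm_add_sq (𝕜 := ℂ), h1]; simp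
    have hn1 : ‖v‖ = ‖(v : W)‖ := rfl
    rw [hn1]
    nlinarith [norm_nonneg ((v : W) + f v), norm_nonneg (v : W), norm_nonneg (f v)]
  have hanti : AntilipschitzWith 1 F := F.antilipschitz_of_bound hbound
  have := hanti.isClosed_range F.uniformContinuous
  convert this using 1
  exact congrArg Set.range (funext fun v => (hFapp v).symm)

theorem isClosed_sup_ortho (U V : Submodule ℂ W) (hU : IsClosed (U : Set W))
    (hV : IsClosed (V : Set W)) (h : V ≤ Uᗮ) :
    IsClosed ((U ⊔ V : Submodule ℂ W) : Set W) := by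
  have key := isClosed_range_add3 U V hU hV 0 (by simp) 
    (fun u v => by
      have := h v.2
      exact ((Submodule.mem_orthogonal U _).mp this u u.2).symm ▸ 
        (Submodule.mem_orthogonal U (v : W)).mp this u u.2)
    (by simp)
  have hset : ((U ⊔ V : Submodule ℂ W) : Set W)
      = Set.range fun p : U × V => (p.1 : W) + (0 : U →L[ℂ] W) p.1 + (p.2 : W) := by
    ext x
    simp only [SetLike.mem_coe, Submodule.mem_sup, Set.mem_range, ContinuousLinearMap.zero_apply,
      add_zero]
    constructor
    · rintro ⟨y, hy, z, hz, rfl⟩; exact ⟨(⟨y, hy⟩, ⟨z, hz⟩), by simp⟩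
    · rintro ⟨⟨u, v⟩, rfl⟩; exact ⟨u, u.2, v, v.2, by simp⟩
  rw [hset]; exact key

end Aux

section JAux

variable {W : Type*} [NormedAddCommGroup W] [InnerProductSpace ℂ W] [CompleteSpace W]
variable {J : W →L[ℂ] W}

local notation "⟪" x ", " y "⟫" => @inner ℂ _ _ x y

theorem JJ_eq (hJskew : ContinuousLinearMap.adjoint J = -J)
    (hJunitary : (ContinuousLinearMap.adjoint J).comp J = ContinuousLinearMap.id ℂ W)
    (x : W) : J (J x) = -x := by
  have h : ((ContinuousLinearMap.adjoint J).comp J) x = (ContinuousLinearMap.id ℂ W) x := by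
    rw [hJunitary]
  simp only [ContinuousLinearMap.coe_comp', Function.comp_apply, hJskew,
    ContinuousLinearMap.neg_apply, ContinuousLinearMap.coe_id', id_eq] at h
  exact neg_eq_iff_eq_neg.mp h

theorem Jinner (hJunitary : (ContinuousLinearMap.adjoint J).comp J = ContinuousLinearMap.id ℂ W)
    (x y : W) : ⟪J x, J y⟫ = ⟪x, y⟫ := by
  rw [← ContinuousLinearMap.adjoint_inner_right]
  have h : ((ContinuousLinearMap.adjoint J).comp J) y = (ContinuousLinearMap.id ℂ W) y := by
    rw [hJunitary]
  simp only [ContinuousLinearMap.coe_comp', Function.comp_apply,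
    ContinuousLinearMap.coe_id', id_eq] at h
  rw [h]

theorem Jskew_inner (hJskew : ContinuousLinearMap.adjoint J = -J) (x y : W) :
    ⟪J x, y⟫ = -⟪x, J y⟫ := by
  have := ContinuousLinearMap.adjoint_inner_right J x y
  rw [hJskew] at this
  simp only [ContinuousLinearMap.neg_apply, inner_neg_right] at this
  exact this.symm

theorem mem_mapJ (hJskew : ContinuousLinearMap.adjoint J = -J)
    (hJunitary : (ContinuousLinearMap.adjoint J).comp J = ContinuousLinearMap.id ℂ W)
    (L : Submodule ℂ W) (x : W) : x ∈ Submodule.map J.toLinearMap L ↔ J x ∈ L := by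
  constructor
  · rintro ⟨y, hy, rfl⟩
    rw [ContinuousLinearMap.coe_coe, JJ_eq hJskew hJunitary]
    exact L.neg_mem hy
  · intro h
    exact ⟨-(J x), L.neg_mem h, by rw [map_neg, ContinuousLinearMap.coe_coe, JJ_eq hJskew hJunitary, neg_neg]⟩

theorem mapJ_mapJ (hJskew : ContinuousLinearMap.adjoint J = -J)
    (hJunitary : (ContinuousLinearMap.adjoint J).comp J = ContinuousLinearMap.id ℂ W)
    (L : Submodule ℂ W) : Submodule.map J.toLinearMap (Submodule.map J.toLinearMap L) = L := by
  ext x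
  rw [mem_mapJ hJskew hJunitary, mem_mapJ hJskew hJunitary, JJ_eq hJskew hJunitary]
  exact L.neg_mem_iff

theorem mapJ_orthogonal (hJskew : ContinuousLinearMap.adjoint J = -J)
    (hJunitary : (ContinuousLinearMap.adjoint J).comp J = ContinuousLinearMap.id ℂ W)
    (L : Submodule ℂ W) : (Submodule.map J.toLinearMap L)ᗮ = Submodule.map J.toLinearMap Lᗮ := by
  ext x
  rw [mem_mapJ hJskew hJunitary, Submodule.mem_orthogonal, Submodule.mem_orthogonal]
  constructor
  · intro h y hy
    have h2 := h (J y) ⟨y, hy, rfl⟩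
    rw [Jskew_inner hJskew] at h2
    exact neg_eq_zero.mp h2
  · rintro h u ⟨y, hy, rfl⟩
    rw [ContinuousLinearMap.coe_coe, Jskew_inner hJskew, h y hy, neg_zero]

theorem Jinj (hJskew : ContinuousLinearMap.adjoint J = -J)
    (hJunitary : (ContinuousLinearMap.adjoint J).comp J = ContinuousLinearMap.id ℂ W) :
    Function.Injective (J : W → W) := by
  intro a b hab
  have : J (J a) = J (J b) := congrArg J hab
  rw [JJ_eq hJskew hJunitary, JJ_eq hJskew hJunitary] at this
  exact neg_injective this

theorem mapJ_closed (hJskew : ContinuousLinearMap.adjoint J = -J)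
    (hJunitary : (ContinuousLinearMap.adjoint J).comp J = ContinuousLinearMap.id ℂ W)
    {L : Submodule ℂ W} (hL : IsClosed (L : Set W)) :
    IsClosed ((Submodule.map J.toLinearMap L : Submodule ℂ W) : Set W) := by
  have : ((Submodule.map J.toLinearMap L : Submodule ℂ W) : Set W) = (J : W → W) ⁻¹' (L : Set W) := by
    ext x
    simpa using mem_mapJ hJskew hJunitary L x
  rw [this]
  exact hL.preimage J.continuous

end JAux


/-- let `Ĥ` be a complex Hilbert space with a skew-adjoint unitary `J`
(defining the symplectic form `ω(ξ,η) = ⟨Jξ,η⟩`, with annihilator `L^ω = J(L^⊥)`),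
`Γ` a closed isotropic subspace, `β = Γ^ω ∩ Γ^⊥`, and `N ⊆ β` a closed Lagrangian
subspace of `β`. Then the orthogonal complement of `Γ^ω` is `JΓ`, the orthogonal
complement of `N` in `β` is `JN`, and a closed subspace `M` is Lagrangian and transversal
to `(Γ, Γ^ω)` with `γ_!M = N` iff `M` is the graph of a unique bounded operator
`μ : N ⊕ JΓ → JN ⊕ Γ` such that `ψ(w) = μ(Jw)` is self-adjoint on `JN ⊕ Γ` and
`P_{JN}(ψ(w)) = 0` for `w ∈ JN`; the zero operator corresponds to `M = N ⊕ JΓ`. -/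
theorem statement_19
    {W : Type*} [NormedAddCommGroup W] [InnerProductSpace ℂ W] [CompleteSpace W]
    (J : W →L[ℂ] W)
    (hJskew : ContinuousLinearMap.adjoint J = -J)
    (hJunitary : (ContinuousLinearMap.adjoint J).comp J = ContinuousLinearMap.id ℂ W)
    (Γ : Submodule ℂ W)
    (hΓcl : IsClosed ((Γ : Submodule ℂ W) : Set W))
    (hΓiso : Γ ≤ Submodule.map J.toLinearMap Γᗮ)
    (N : Submodule ℂ W)
    (hNcl : IsClosed ((N : Submodule ℂ W) : Set W))
    (hNβ : N ≤ Submodule.map J.toLinearMap Γᗮ ⊓ Γᗮ)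
    (hNLag : ∀ ξ ∈ Submodule.map J.toLinearMap Γᗮ ⊓ Γᗮ,
      ((∀ η ∈ N, (inner ℂ (J ξ) η : ℂ) = 0) ↔ ξ ∈ N)) :
    (Submodule.map J.toLinearMap Γᗮ)ᗮ = Submodule.map J.toLinearMap Γ ∧
    (Submodule.map J.toLinearMap Γᗮ ⊓ Γᗮ) ⊓ Nᗮ = Submodule.map J.toLinearMap N ∧
    (∀ M : Submodule ℂ W,
      (IsClosed ((M : Submodule ℂ W) : Set W) ∧ Submodule.map J.toLinearMap Mᗮ = M ∧
          TransversalWrt Γ (Submodule.map J.toLinearMap Γᗮ) M ∧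
          gammaPush Γ (Submodule.map J.toLinearMap Γᗮ) M = N) ↔
        (∃! μ : ↥(N ⊔ Submodule.map J.toLinearMap Γ) →L[ℂ] ↥(Submodule.map J.toLinearMap N ⊔ Γ),
          (M : Set W) =
            Set.range (fun v : ↥(N ⊔ Submodule.map J.toLinearMap Γ) => (v : W) + ((μ v : W))) ∧
          (∀ (w w' : ↥(Submodule.map J.toLinearMap N ⊔ Γ))
              (hw : J (w : W) ∈ N ⊔ Submodule.map J.toLinearMap Γ)
              (hw' : J (w' : W) ∈ N ⊔ Submodule.map J.toLinearMap Γ),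
            (inner ℂ ((μ ⟨J (w : W), hw⟩ : W)) ((w' : W)) : ℂ) =
              (inner ℂ ((w : W)) ((μ ⟨J (w' : W), hw'⟩ : W)) : ℂ)) ∧
          (∀ (w : ↥(Submodule.map J.toLinearMap N ⊔ Γ))
              (hw : J (w : W) ∈ N ⊔ Submodule.map J.toLinearMap Γ),
            (w : W) ∈ Submodule.map J.toLinearMap N →
              orthProj (Submodule.map J.toLinearMap N) ((μ ⟨J (w : W), hw⟩ : W)) = 0))) ∧
    (IsClosed ((N ⊔ Submodule.map J.toLinearMap Γ : Submodule ℂ W) : Set W) ∧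
      Submodule.map J.toLinearMap (N ⊔ Submodule.map J.toLinearMap Γ)ᗮ = N ⊔ Submodule.map J.toLinearMap Γ ∧
      TransversalWrt Γ (Submodule.map J.toLinearMap Γᗮ) (N ⊔ Submodule.map J.toLinearMap Γ) ∧
      gammaPush Γ (Submodule.map J.toLinearMap Γᗮ) (N ⊔ Submodule.map J.toLinearMap Γ) = N) := by
  have hJJ := JJ_eq hJskew hJunitary
  have hJi := Jinner hJunitary
  have hJs := Jskew_inner hJskew
  have hJinj := Jinj hJskew hJunitary
  have hmapmap := mapJ_mapJ hJskew hJunitary (W := W)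
  have hmaporth := mapJ_orthogonal hJskew hJunitary (W := W)
  set Γ' := Submodule.map J.toLinearMap Γᗮ with hΓ'def
  set JΓ := Submodule.map J.toLinearMap Γ with hJΓdef
  set JN := Submodule.map J.toLinearMap N with hJNdef
  set β := Γ' ⊓ Γᗮ with hβdef
  set V := N ⊔ JΓ with hVdef
  set V' := JN ⊔ Γ with hV'def
  haveI : CompleteSpace Γ := hΓcl.completeSpace_coe
  haveI : CompleteSpace N := hNcl.completeSpace_coe
  have hΓ'cl : IsClosed (Γ' : Set W) := mapJ_closed hJskew hJunitary Γ.isClosed_orthogonal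
  have hJΓcl : IsClosed (JΓ : Set W) := mapJ_closed hJskew hJunitary hΓcl
  have hJNcl : IsClosed (JN : Set W) := mapJ_closed hJskew hJunitary hNcl
  have hβcl : IsClosed (β : Set W) := by
    have : (β : Set W) = (Γ' : Set W) ∩ (Γᗮ : Set W) := rfl
    rw [this]; exact hΓ'cl.inter Γ.isClosed_orthogonal
  haveI : CompleteSpace Γ' := hΓ'cl.completeSpace_coe
  haveI : CompleteSpace JΓ := hJΓcl.completeSpace_coe
  haveI : CompleteSpace JN := hJNcl.completeSpace_coe
  haveI : CompleteSpace β := hβcl.completeSpace_coe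
  have hΓoo : Γᗮᗮ = Γ := Submodule.orthogonal_orthogonal Γ
  have hNoo : Nᗮᗮ = N := Submodule.orthogonal_orthogonal N
  -- conjunct 1
  have c1 : Γ'ᗮ = JΓ := by rw [hΓ'def, hmaporth, hΓoo]
  -- basic lattice facts
  have hΓΓ' : Γ ≤ Γ' := hΓiso
  have hNβle : N ≤ β := hNβ
  have hbGo : β ≤ Γᗮ := inf_le_right
  have hβΓ' : β ≤ Γ' := inf_le_left
  have hNGo : N ≤ Γᗮ := le_trans hNβle hbGo
  have hNΓ' : N ≤ Γ' := le_trans hNβle hβΓ'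
  have hGbo : Γ ≤ βᗮ := le_trans (Submodule.le_orthogonal_orthogonal Γ)
    (Submodule.orthogonal_le hbGo)
  have hGNo : Γ ≤ Nᗮ := le_trans (Submodule.le_orthogonal_orthogonal Γ)
    (Submodule.orthogonal_le hNGo)
  -- J β = β
  have hJβ : Submodule.map J.toLinearMap β = β := by
    rw [hβdef, Submodule.map_inf J.toLinearMap hJinj, hΓ'def, hmapmap, inf_comm]
  -- conjunct 2
  have c2 : β ⊓ Nᗮ = JN := by
    ext x
    constructor
    · rintro ⟨hxβ, hxN⟩
      have hJxβ : J x ∈ β := by rw [← hJβ]; exact Submodule.mem_map_of_mem hxβ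
      have h := hNLag (J x) hJxβ
      have hJx : J x ∈ N := by
        apply h.mp
        intro η hη
        rw [hJJ, inner_neg_left]
        have : (inner ℂ η x : ℂ) = 0 := (Submodule.mem_orthogonal N x).mp hxN η hη
        rw [← inner_conj_symm, this, map_zero, neg_zero]
      rw [hJNdef, mem_mapJ hJskew hJunitary]
      exact hJx
    · intro hx
      rw [hJNdef, mem_mapJ hJskew hJunitary] at hx
      have hxβ : x ∈ β := by
        have : J (J x) ∈ Submodule.map J.toLinearMap β := Submodule.mem_map_of_mem (hNβle hx)
        rw [hJβ, hJJ] at this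
        exact (Submodule.neg_mem_iff β).mp this
      refine ⟨hxβ, (Submodule.mem_orthogonal N x).mpr fun η hη => ?_⟩
      have h := (hNLag (J x) (hNβle hx)).mpr hx η hη
      rw [hJJ, inner_neg_left, neg_eq_zero] at h
      rw [← inner_conj_symm, h, map_zero]
  -- more lattice facts
  have hJNβ : JN ≤ β := c2 ▸ inf_le_left
  have hJNNo : JN ≤ Nᗮ := c2 ▸ inf_le_right
  have hJNGo : JN ≤ Γᗮ := le_trans hJNβ hbGo
  have hJNΓ' : JN ≤ Γ' := le_trans hJNβ hβΓ'
  have hΓJNo : Γ ≤ JNᗮ := le_trans (Submodule.le_orthogonal_orthogonal Γ)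
    (Submodule.orthogonal_le hJNGo)
  have hNJN : N ⊓ JN = ⊥ := by
    rw [eq_bot_iff]
    intro x hx
    have : x ∈ N ⊓ Nᗮ := ⟨hx.1, hJNNo hx.2⟩
    rwa [N.inf_orthogonal_eq_bot] at this
  have hsupΓβ : Γ ⊔ β = Γ' := by
    have h := Submodule.sup_orthogonal_inf_of_hasOrthogonalProjection hΓΓ'
    have h2 : Γᗮ ⊓ Γ' = β := by rw [hβdef, inf_comm]
    rwa [h2] at h
  have hβNJN : N ⊔ JN = β := by
    have h := Submodule.sup_orthogonal_inf_of_hasOrthogonalProjection hNβle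
    have h2 : Nᗮ ⊓ β = JN := by rw [inf_comm, c2]
    rwa [h2] at h
  -- V and V'
  have hVo : Vᗮ = V' := by
    rw [hVdef, ← Submodule.inf_orthogonal, hJΓdef, hmaporth, ← hΓ'def]
    have hΓle : Γ ≤ Nᗮ ⊓ Γ' := le_inf hGNo hΓΓ'
    have := Submodule.sup_orthogonal_inf_of_hasOrthogonalProjection hΓle
    have hinner : Γᗮ ⊓ (Nᗮ ⊓ Γ') = JN := by
      rw [← c2, hβdef, inf_comm Nᗮ Γ', ← inf_assoc, inf_comm Γᗮ Γ']
    rw [hinner] at this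
    rw [← this, sup_comm, hV'def]
  have hVcl : IsClosed (V : Set W) := by
    rw [hVdef]
    exact isClosed_sup_ortho N JΓ hNcl hJΓcl (c1 ▸ Submodule.orthogonal_le hNΓ')
  have hV'cl : IsClosed (V' : Set W) := by
    rw [hV'def]
    exact isClosed_sup_ortho JN Γ hJNcl hΓcl hΓJNo
  haveI : CompleteSpace V := hVcl.completeSpace_coe
  haveI : CompleteSpace V' := hV'cl.completeSpace_coe
  have hVoo : Vᗮᗮ = V := Submodule.orthogonal_orthogonal V
  have hV'o : V'ᗮ = V := by rw [← hVo, hVoo]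
  have hVV' : V ⊓ V' = ⊥ := by rw [← hVo]; exact V.inf_orthogonal_eq_bot
  have hVsup : V ⊔ V' = ⊤ := by rw [← hVo]; exact Submodule.sup_orthogonal_of_hasOrthogonalProjection
  have hJV : Submodule.map J.toLinearMap V = V' := by
    rw [hVdef, Submodule.map_sup, hJΓdef, hmapmap, ← hJNdef, ← hV'def]
  have hJV' : Submodule.map J.toLinearMap V' = V := by
    rw [hV'def, Submodule.map_sup, hJNdef, hmapmap, ← hJΓdef, ← hVdef]
  have hNV : N ≤ V := le_sup_left
  have hJΓV : JΓ ≤ V := le_sup_right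
  have hJNV' : JN ≤ V' := le_sup_left
  have hΓV' : Γ ≤ V' := le_sup_right
  have hV'Γ' : V' ≤ Γ' := sup_le hJNΓ' hΓΓ'
  have hNβ2 : N ≤ β := hNβle
  -- inner product vanishing
  have hiVV' : ∀ x ∈ V, ∀ y ∈ V', (inner ℂ x y : ℂ) = 0 := by
    intro x hx y hy
    exact (Submodule.mem_orthogonal V y).mp (hVo ▸ hy) x hx
  have hiV'V : ∀ x ∈ V', ∀ y ∈ V, (inner ℂ x y : ℂ) = 0 := by
    intro x hx y hy
    rw [← inner_conj_symm, hiVV' y hy x hx, map_zero]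
  -- orthProj helpers
  have hPV'eq : ∀ x : W, orthProj V' x = x - orthProj V x := by
    intro x; rw [← hVo]; exact orthProj_orthogonal_eq V hVcl x
  have hJmemV' : ∀ x ∈ V, J x ∈ V' := fun x hx => hJV ▸ Submodule.mem_map_of_mem hx
  have hJmemV : ∀ x ∈ V', J x ∈ V := fun x hx => hJV' ▸ Submodule.mem_map_of_mem hx
  have hPβV' : ∀ y ∈ V', orthProj β y = orthProj JN y ∧ y - orthProj JN y ∈ Γ := by
    intro y hy
    rw [hV'def] at hy
    obtain ⟨b, hb, g, hg, rfl⟩ := Submodule.mem_sup.mp hy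
    have h1 : orthProj JN (b + g) = b := orthProj_add_of_mem hJNcl hΓJNo hb hg
    have h2 : orthProj β (b + g) = b := orthProj_add_of_mem hβcl hGbo (hJNβ hb) hg
    rw [h1, h2]
    exact ⟨rfl, by simpa using hg⟩
  -- uniqueness of graph operators
  have huniq : ∀ μ₁ μ₂ : ↥V →L[ℂ] ↥V',
      Set.range (fun v : ↥V => (v : W) + (μ₁ v : W))
        = Set.range (fun v : ↥V => (v : W) + (μ₂ v : W)) → μ₁ = μ₂ := by
    intro μ₁ μ₂ h
    ext v
    have hmem : (v : W) + (μ₁ v : W) ∈ Set.range (fun v : ↥V => (v : W) + (μ₂ v : W)) := by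
      rw [← h]; exact ⟨v, rfl⟩
    obtain ⟨u, hu⟩ := hmem
    have hd : (v : W) - (u : W) ∈ V ⊓ V' := by
      refine ⟨V.sub_mem v.2 u.2, ?_⟩
      have heq : (v : W) - (u : W) = (μ₂ u : W) - (μ₁ v : W) :=
        sub_eq_sub_iff_add_eq_add.mpr (hu.symm.trans (add_comm _ _))
      rw [heq]; exact V'.sub_mem (μ₂ u).2 (μ₁ v).2
    rw [hVV', Submodule.mem_bot, sub_eq_zero] at hd
    have huv : u = v := Subtype.ext hd.symm
    subst huv
    exact (add_left_cancel hu).symm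
  -- the main equivalence
  have main : ∀ M : Submodule ℂ W,
      (IsClosed ((M : Submodule ℂ W) : Set W) ∧ Submodule.map J.toLinearMap Mᗮ = M ∧
          TransversalWrt Γ Γ' M ∧ gammaPush Γ Γ' M = N) ↔
        (∃! μ : ↥V →L[ℂ] ↥V',
          (M : Set W) = Set.range (fun v : ↥V => (v : W) + ((μ v : W))) ∧
          (∀ (w w' : ↥V') (hw : J (w : W) ∈ V) (hw' : J (w' : W) ∈ V),
            (inner ℂ ((μ ⟨J (w : W), hw⟩ : W)) ((w' : W)) : ℂ) =
              (inner ℂ ((w : W)) ((μ ⟨J (w' : W), hw'⟩ : W)) : ℂ)) ∧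
          (∀ (w : ↥V') (hw : J (w : W) ∈ V),
            (w : W) ∈ JN → orthProj JN ((μ ⟨J (w : W), hw⟩ : W)) = 0)) := by
    intro M
    constructor
    · rintro ⟨hMcl, hMlag, ⟨hMΓcl, hMΓ, hMΓ'⟩, hγ⟩
      haveI : CompleteSpace M := hMcl.completeSpace_coe
      have hV'Vo : V' ≤ Vᗮ := le_of_eq hVo.symm
      have hΓVo : Γ ≤ Vᗮ := le_trans hΓV' hV'Vo
      have hgp : gammaPush Γ Γ' M = (M ⊓ Γ').map (orthProj β).toLinearMap := rfl
      have hγ' : ∀ x : W, x ∈ M → x ∈ Γ' → orthProj β x ∈ N := by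
        intro x h1 h2
        rw [← hγ, hgp]
        exact Submodule.mem_map_of_mem ⟨h1, h2⟩
      have hγ'' : ∀ n : W, n ∈ N → ∃ x : W, (x ∈ M ∧ x ∈ Γ') ∧ orthProj β x = n := by
        intro n hn
        rw [← hγ, hgp] at hn
        obtain ⟨x, hx, hxe⟩ := hn
        exact ⟨x, hx, hxe⟩
      have hMiso : ∀ x ∈ M, ∀ y ∈ M, (inner ℂ (J x) y : ℂ) = 0 := by
        intro x hx y hy
        rw [← hMlag] at hy
        obtain ⟨z, hz, rfl⟩ := hy
        rw [ContinuousLinearMap.coe_coe, hJi]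
        exact (Submodule.mem_orthogonal M z).mp hz x hx
      have hMV' : ∀ x ∈ M, x ∈ V' → x = 0 := by
        intro x hxM hxV'
        have hxΓ' : x ∈ Γ' := hV'Γ' hxV'
        have hPx : orthProj β x ∈ N := hγ' x hxM hxΓ'
        have hPxJN : orthProj β x = orthProj JN x := (hPβV' x hxV').1
        have hb : orthProj β x ∈ N ⊓ JN := ⟨hPx, hPxJN ▸ orthProj_mem JN hJNcl x⟩
        rw [hNJN, Submodule.mem_bot] at hb
        have hP0 : orthProj JN x = 0 := by rw [← hPxJN, hb]
        have hxΓ : x ∈ Γ := by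
          have h5 := (hPβV' x hxV').2
          rwa [hP0, sub_zero] at h5
        have : x ∈ M ⊓ Γ := ⟨hxM, hxΓ⟩
        rwa [hMΓ, Submodule.mem_bot] at this
      have hNproj : ∀ n : W, n ∈ N → ∃ m : W, m ∈ M ∧ orthProj V m = n := by
        intro n hn
        obtain ⟨x, ⟨hxM, hxΓ'⟩, hxβ⟩ := hγ'' n hn
        rw [← hsupΓβ] at hxΓ'
        obtain ⟨g, hg, b, hb, hgb⟩ := Submodule.mem_sup.mp hxΓ'
        have hpb : orthProj β x = b := by
          rw [← hgb, show g + b = b + g from add_comm g b]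
          exact orthProj_add_of_mem hβcl hGbo hb hg
        have hbn : b = n := by rw [← hpb, hxβ]
        refine ⟨x, hxM, ?_⟩
        rw [← hgb, hbn, show g + n = n + g from add_comm g n]
        exact orthProj_add_of_mem hVcl hΓVo (hNV hn) hg
      have hsurj : ∀ v : W, v ∈ V → ∃ m : W, m ∈ M ∧ orthProj V m = v := by
        intro v hv
        have hvtop : v ∈ M ⊔ Γ' := by rw [hMΓ']; trivial
        obtain ⟨m, hm, cc, hcc, hmc⟩ := Submodule.mem_sup.mp hvtop
        rw [← hsupΓβ] at hcc
        obtain ⟨g, hg, b, hb, hgb⟩ := Submodule.mem_sup.mp hcc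
        rw [← hβNJN] at hb
        obtain ⟨n, hn, jn, hjn, hnjn⟩ := Submodule.mem_sup.mp hb
        have hPcc : orthProj V cc = n := by
          rw [← hgb, ← hnjn, map_add, map_add,
            orthProj_eq_zero V hVcl (hΓVo hg),
            orthProj_eq_self V hVcl (hNV hn),
            orthProj_eq_zero V hVcl (hV'Vo (hJNV' hjn))]
          simp
        have hPv : orthProj V v = v := orthProj_eq_self V hVcl hv
        have hPm : orthProj V m = v - n := by
          have h6 : orthProj V (m + cc) = orthProj V v := congrArg _ hmc
          rw [map_add, hPcc, hPv] at h6
          exact eq_sub_of_add_eq h6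
        obtain ⟨m', hm', hPm'⟩ := hNproj n hn
        refine ⟨m + m', M.add_mem hm hm', ?_⟩
        rw [map_add, hPm, hPm']
        abel
      let φ₀ : ↥M →L[ℂ] W := (orthProj V).comp M.subtypeL
      let φ : ↥M →L[ℂ] ↥V := φ₀.codRestrict V (fun m => orthProj_mem V hVcl m)
      have hφapp : ∀ m : ↥M, (φ m : W) = orthProj V ((m : W)) := fun m => rfl
      have hker : LinearMap.ker (φ : ↥M →ₗ[ℂ] ↥V) = ⊥ := by
        rw [LinearMap.ker_eq_bot']
        intro m hm
        have h0 : orthProj V ((m : W)) = 0 := by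
          rw [← hφapp m, ← ContinuousLinearMap.coe_coe φ, hm]; rfl
        have hmV' : (m : W) ∈ V' := by
          rw [← hVo]
          have h8 := sub_orthProj_mem V hVcl ((m : W))
          rwa [h0, sub_zero] at h8
        exact Subtype.ext (hMV' _ m.2 hmV')
      have hrange : LinearMap.range (φ : ↥M →ₗ[ℂ] ↥V) = ⊤ := by
        rw [LinearMap.range_eq_top]
        intro v
        obtain ⟨m, hm, hPm⟩ := hsurj (v : W) v.2
        exact ⟨⟨m, hm⟩, Subtype.ext hPm⟩
      let e := ContinuousLinearEquiv.ofBijective φ hker hrange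
      let μ₀ : ↥V →L[ℂ] W := (orthProj V').comp (M.subtypeL.comp (e.symm : ↥V →L[ℂ] ↥M))
      let μ : ↥V →L[ℂ] ↥V' := μ₀.codRestrict V' (fun v => orthProj_mem V' hV'cl _)
      have hμapp : ∀ v : ↥V, (μ v : W) = orthProj V' (((e.symm v : ↥M) : W)) := fun v => rfl
      have hkey : ∀ v : ↥V, ((e.symm v : ↥M) : W) = (v : W) + (μ v : W) := by
        intro v
        have h1 : φ (e.symm v) = v :=
          ContinuousLinearEquiv.ofBijective_apply_symm_apply φ hker hrange v
        have h2 : orthProj V (((e.symm v : ↥M) : W)) = (v : W) := congrArg Subtype.val h1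
        have h3 := orthProj_add_orthProj_orthogonal V hVcl (((e.symm v : ↥M) : W))
        rw [h2] at h3
        rw [hμapp, ← hVo]
        exact h3.symm
      have hgraphset : (M : Set W) = Set.range (fun v : ↥V => (v : W) + ((μ v : W))) := by
        ext x
        constructor
        · intro hx
          refine ⟨φ ⟨x, hx⟩, ?_⟩
          have h4 : e.symm (φ ⟨x, hx⟩) = ⟨x, hx⟩ :=
            ContinuousLinearEquiv.ofBijective_symm_apply_apply φ hker hrange ⟨x, hx⟩
          show ((φ ⟨x, hx⟩ : ↥V) : W) + (μ (φ ⟨x, hx⟩) : W) = x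
          rw [← hkey (φ ⟨x, hx⟩), h4]
        · rintro ⟨v, rfl⟩
          show (v : W) + ((μ v : W)) ∈ (M : Set W)
          rw [← hkey v]
          exact (e.symm v).2
      have hmemMgr : ∀ v : ↥V, ((v : W) + (μ v : W)) ∈ M := by
        intro v
        rw [← SetLike.mem_coe, hgraphset]
        exact ⟨v, rfl⟩
      have hsymm : ∀ (w w' : ↥V') (hw : J ((w : W)) ∈ V) (hw' : J ((w' : W)) ∈ V),
          (inner ℂ ((μ ⟨J ((w : W)), hw⟩ : W)) ((w' : W)) : ℂ)
            = inner ℂ ((w : W)) ((μ ⟨J ((w' : W)), hw'⟩ : W)) := by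
        intro w w' hw hw'
        set v : ↥V := ⟨J ((w : W)), hw⟩ with hvdef
        set v' : ↥V := ⟨J ((w' : W)), hw'⟩ with hv'def
        have hcv : (v : W) = J ((w : W)) := rfl
        have hcv' : (v' : W) = J ((w' : W)) := rfl
        have h0 := hMiso _ (hmemMgr v) _ (hmemMgr v')
        rw [map_add, inner_add_left, inner_add_right, inner_add_right] at h0
        have e1 : (inner ℂ (J ((v : W))) ((v' : W)) : ℂ) = 0 := by
          rw [hcv, hJJ, inner_neg_left, hiV'V _ w.2 _ v'.2, neg_zero]
        have e2 : (inner ℂ (J ((v : W))) ((μ v' : W)) : ℂ)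
            = -(inner ℂ ((w : W)) ((μ v' : W)) : ℂ) := by
          rw [hcv, hJJ, inner_neg_left]
        have e3 : (inner ℂ (J ((μ v : W))) ((v' : W)) : ℂ)
            = (inner ℂ ((μ v : W)) ((w' : W)) : ℂ) := by
          rw [hJs, hcv', hJJ, inner_neg_right, neg_neg]
        have e4 : (inner ℂ (J ((μ v : W))) ((μ v' : W)) : ℂ) = 0 :=
          hiVV' _ (hJmemV _ (μ v).2) _ (μ v').2
        rw [e1, e2, e3, e4] at h0
        linear_combination h0
      have hPcond : ∀ (w : ↥V') (hw : J ((w : W)) ∈ V),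
          (w : W) ∈ JN → orthProj JN ((μ ⟨J ((w : W)), hw⟩ : W)) = 0 := by
        intro w hw hwJN
        set v : ↥V := ⟨J ((w : W)), hw⟩ with hvdef
        have hvN : (v : W) ∈ N := by
          have h1 : J ((w : W)) ∈ Submodule.map J.toLinearMap JN := Submodule.mem_map_of_mem hwJN
          rw [hJNdef, hmapmap] at h1
          exact h1
        have hmΓ' : ((v : W) + (μ v : W)) ∈ Γ' := Γ'.add_mem (hNΓ' hvN) (hV'Γ' (μ v).2)
        have hPβm : orthProj β ((v : W) + (μ v : W)) ∈ N := hγ' _ (hmemMgr v) hmΓ'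
        have h2 : orthProj β ((v : W) + (μ v : W)) = (v : W) + orthProj JN ((μ v : W)) := by
          rw [map_add, orthProj_eq_self β hβcl (hNβle hvN), (hPβV' _ (μ v).2).1]
        rw [h2] at hPβm
        have h3 : orthProj JN ((μ v : W)) ∈ N := by
          have h9 : orthProj JN ((μ v : W))
              = ((v : W) + orthProj JN ((μ v : W))) - (v : W) := by abel
          rw [h9]; exact N.sub_mem hPβm hvN
        have h4 : orthProj JN ((μ v : W)) ∈ N ⊓ JN := ⟨h3, orthProj_mem JN hJNcl _⟩
        rwa [hNJN, Submodule.mem_bot] at h4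
      exact ⟨μ, ⟨hgraphset, hsymm, hPcond⟩,
        fun μ' h => huniq μ' μ (h.1.symm.trans hgraphset)⟩
    · rintro ⟨μ, ⟨hgraph, hsym, hP⟩, -⟩
      have hmemM : ∀ x : W, x ∈ M ↔ ∃ v : ↥V, (v : W) + (μ v : W) = x := by
        intro x
        rw [← SetLike.mem_coe, hgraph]
        exact ⟨fun ⟨v, hv⟩ => ⟨v, hv⟩, fun ⟨v, hv⟩ => ⟨v, hv⟩⟩
      have hMcl : IsClosed (M : Set W) := by
        rw [hgraph]
        have hfun : (fun v : ↥V => (v : W) + (V'.subtypeL.comp μ) v)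
            = fun v : ↥V => (v : W) + (μ v : W) := rfl
        rw [← hfun]
        exact isClosed_range_graph V hVcl (V'.subtypeL.comp μ)
          (fun v => hiVV' _ v.2 _ (μ v).2)
      have hMΓ : M ⊓ Γ = ⊥ := by
        rw [eq_bot_iff]
        rintro x ⟨hxM, hxΓ⟩
        obtain ⟨v, rfl⟩ := (hmemM x).mp hxM
        have hvV' : (v : W) ∈ V' := by
          have h : (v : W) = ((v : W) + (μ v : W)) - (μ v : W) := by abel
          rw [h]
          exact V'.sub_mem (hΓV' hxΓ) (μ v).2
        have hb : (v : W) ∈ V ⊓ V' := ⟨v.2, hvV'⟩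
        rw [hVV', Submodule.mem_bot] at hb
        have hv0 : v = 0 := Subtype.ext hb
        rw [Submodule.mem_bot, hv0]
        simp
      have hMΓ' : M ⊔ Γ' = ⊤ := by
        rw [eq_top_iff]
        intro x _
        have hva : orthProj V x ∈ V := orthProj_mem V hVcl x
        set va : ↥V := ⟨orthProj V x, hva⟩ with hvadef
        have hmM : (va : W) + (μ va : W) ∈ M := (hmemM _).mpr ⟨va, rfl⟩
        refine Submodule.mem_sup.mpr ⟨_, hmM, x - ((va : W) + (μ va : W)), ?_, by abel⟩
        have h1 : x - (va : W) ∈ V' := by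
          rw [← hVo]
          exact sub_orthProj_mem V hVcl x
        have h2 : x - ((va : W) + (μ va : W)) = (x - (va : W)) - (μ va : W) := by abel
        rw [h2]
        exact Γ'.sub_mem (hV'Γ' h1) (hV'Γ' (μ va).2)
      have hμN : ∀ v : ↥V, (v : W) ∈ N → orthProj JN ((μ v : W)) = 0 := by
        intro v hvN
        have hwJN : -(J (v : W)) ∈ JN := by
          rw [hJNdef]
          exact Submodule.neg_mem _ (Submodule.mem_map_of_mem hvN)
        have hwV' : -(J (v : W)) ∈ V' := hJNV' hwJN
        have hJw : J (-(J (v : W))) ∈ V := by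
          rw [map_neg, hJJ, neg_neg]; exact v.2
        have h := hP ⟨-(J (v : W)), hwV'⟩ hJw hwJN
        have hsub : (⟨J (-(J ((v : W)))), hJw⟩ : ↥V) = v :=
          Subtype.ext (by show J (-(J ((v : W)))) = (v : W); rw [map_neg, hJJ, neg_neg])
        rwa [hsub] at h
      have hγM : gammaPush Γ Γ' M = N := by
        have hgp : gammaPush Γ Γ' M = (M ⊓ Γ').map (orthProj β).toLinearMap := rfl
        rw [hgp]
        apply le_antisymm
        · rintro x ⟨y, ⟨hyM, hyΓ'⟩, rfl⟩
          obtain ⟨v, rfl⟩ := (hmemM y).mp hyM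
          have hvΓ' : (v : W) ∈ Γ' := by
            have h : (v : W) = ((v : W) + (μ v : W)) - (μ v : W) := by abel
            rw [h]; exact Γ'.sub_mem hyΓ' (hV'Γ' (μ v).2)
          have hvN : (v : W) ∈ N := by
            obtain ⟨n, hn, jg, hjg, hnv⟩ := Submodule.mem_sup.mp v.2
            have hjgΓ' : jg ∈ Γ' := by
              have h : jg = (v : W) - n := by rw [← hnv]; abel
              rw [h]; exact Γ'.sub_mem hvΓ' (hNΓ' hn)
            have hjgbot : jg ∈ Γ' ⊓ Γ'ᗮ := ⟨hjgΓ', c1.symm ▸ hjg⟩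
            rw [Γ'.inf_orthogonal_eq_bot, Submodule.mem_bot] at hjgbot
            rw [← hnv, hjgbot, add_zero]; exact hn
          have h1 : orthProj β ((v : W) + (μ v : W)) = (v : W) + orthProj β ((μ v : W)) := by
            rw [map_add, orthProj_eq_self β hβcl (hNβle hvN)]
          rw [ContinuousLinearMap.coe_coe, h1, (hPβV' _ (μ v).2).1, hμN v hvN, add_zero]
          exact hvN
        · intro n hn
          have hnV : n ∈ V := hNV hn
          set vn : ↥V := ⟨n, hnV⟩ with hvndef
          refine ⟨(vn : W) + (μ vn : W),
            ⟨(hmemM _).mpr ⟨vn, rfl⟩, Γ'.add_mem (hNΓ' hn) (hV'Γ' (μ vn).2)⟩, ?_⟩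
          rw [ContinuousLinearMap.coe_coe, map_add, orthProj_eq_self β hβcl (hNβle hn), (hPβV' _ (μ vn).2).1,
            hμN vn hn, add_zero]
      have hMΓcl : IsClosed ((M ⊔ Γ : Submodule ℂ W) : Set W) := by
        set f : ↥V →L[ℂ] W := (orthProj JN).comp (V'.subtypeL.comp μ) with hfdef
        have hfapp : ∀ v : ↥V, f v = orthProj JN ((μ v : W)) := fun v => rfl
        have hfJN : ∀ v : ↥V, f v ∈ JN := fun v => orthProj_mem JN hJNcl _
        have key := isClosed_range_add3 V Γ hVcl hΓcl f
          (fun v => hiVV' _ v.2 _ (hJNV' (hfJN v)))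
          (fun v g => hiVV' _ v.2 _ (hΓV' g.2))
          (fun v g => (Submodule.mem_orthogonal JN (g : W)).mp (hΓJNo g.2) (f v) (hfJN v))
        have hset : ((M ⊔ Γ : Submodule ℂ W) : Set W)
            = Set.range fun p : ↥V × ↥Γ => (p.1 : W) + f p.1 + (p.2 : W) := by
          ext x
          simp only [SetLike.mem_coe, Submodule.mem_sup, Set.mem_range]
          constructor
          · rintro ⟨y, hyM, g, hg, rfl⟩
            obtain ⟨v, rfl⟩ := (hmemM y).mp hyM
            have hrest : (μ v : W) - f v ∈ Γ := by
              rw [hfapp]; exact (hPβV' _ (μ v).2).2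
            refine ⟨(v, ⟨((μ v : W) - f v) + g, Γ.add_mem hrest hg⟩), ?_⟩
            show (v : W) + f v + (((μ v : W) - f v) + g) = (v : W) + (μ v : W) + g
            abel
          · rintro ⟨⟨v, g⟩, rfl⟩
            refine ⟨(v : W) + (μ v : W), (hmemM _).mpr ⟨v, rfl⟩,
              (g : W) - ((μ v : W) - f v),
              Γ.sub_mem g.2 (by rw [hfapp]; exact (hPβV' _ (μ v).2).2), ?_⟩
            show (v : W) + (μ v : W) + ((g : W) - ((μ v : W) - f v)) = (v : W) + f v + (g : W)
            abel
        rw [hset]; exact key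
      have hMlag : Submodule.map J.toLinearMap Mᗮ = M := by
        have hbmem : ∀ x : W, orthProj V' x ∈ V' := fun x => orthProj_mem V' hV'cl x
        have hJb : ∀ x : W, J (orthProj V' x) ∈ V := fun x => hJmemV _ (hbmem x)
        set c : W → W := fun x => J ((μ ⟨J (orthProj V' x), hJb x⟩ : W)) with hc
        have hcV : ∀ x, c x ∈ V := fun x => hJmemV _ (μ _).2
        have claim1 : ∀ (x : W) (v : ↥V),
            (inner ℂ ((μ v : W)) (orthProj V' x) : ℂ) = inner ℂ ((v : W)) (c x) := by
          intro x v
          have hwV' : J ((v : W)) ∈ V' := hJmemV' _ v.2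
          have hJw : J (J ((v : W))) ∈ V := by rw [hJJ]; exact V.neg_mem v.2
          have h := hsym ⟨J ((v : W)), hwV'⟩ ⟨orthProj V' x, hbmem x⟩ hJw (hJb x)
          have hsub : (⟨J (J ((v : W))), hJw⟩ : ↥V) = -v :=
            Subtype.ext (by show J (J ((v : W))) = ((-v : ↥V) : W); rw [hJJ]; simp)
          rw [hsub, map_neg] at h
          simp only [NegMemClass.coe_neg, inner_neg_left] at h
          rw [hJs ((v : W)) ((μ ⟨J (orthProj V' x), hJb x⟩ : W))] at h
          simp only [hc]
          exact neg_injective h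
        have hinnerV : ∀ (v : ↥V) (x : W),
            (inner ℂ ((v : W)) x : ℂ) = inner ℂ ((v : W)) (orthProj V x) := by
          intro v x
          conv_lhs => rw [← orthProj_add_orthProj_orthogonal V hVcl x]
          rw [inner_add_right]
          have h0 : (inner ℂ ((v : W)) (orthProj Vᗮ x) : ℂ) = 0 :=
            (Submodule.mem_orthogonal V _).mp (orthProj_mem Vᗮ V.isClosed_orthogonal x) _ v.2
          rw [h0, add_zero]
        have hinnerμ : ∀ (y : ↥V') (x : W),
            (inner ℂ ((y : W)) x : ℂ) = inner ℂ ((y : W)) (orthProj V' x) := by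
          intro y x
          conv_lhs => rw [← orthProj_add_orthProj_orthogonal V' hV'cl x]
          rw [inner_add_right]
          have h0 : (inner ℂ ((y : W)) (orthProj V'ᗮ x) : ℂ) = 0 :=
            (Submodule.mem_orthogonal V' _).mp (orthProj_mem V'ᗮ V'.isClosed_orthogonal x) _ y.2
          rw [h0, add_zero]
        have claim2 : ∀ x : W, x ∈ Mᗮ ↔ orthProj V x + c x = 0 := by
          intro x
          constructor
          · intro hx
            have hall : ∀ v : ↥V, (inner ℂ ((v : W)) (orthProj V x + c x) : ℂ) = 0 := by
              intro v
              have h0 : (inner ℂ ((v : W) + (μ v : W)) x : ℂ) = 0 :=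
                (Submodule.mem_orthogonal M x).mp hx _ ((hmemM _).mpr ⟨v, rfl⟩)
              rw [inner_add_left, hinnerV v x, hinnerμ (μ v) x, claim1 x v] at h0
              rw [inner_add_right]
              exact h0
            have hd : orthProj V x + c x ∈ V := V.add_mem (orthProj_mem V hVcl x) (hcV x)
            have h1 := hall ⟨_, hd⟩
            rwa [inner_self_eq_zero] at h1
          · intro hx
            rw [Submodule.mem_orthogonal]
            intro u hu
            obtain ⟨v, rfl⟩ := (hmemM u).mp hu
            rw [inner_add_left, hinnerV v x, hinnerμ (μ v) x, claim1 x v,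
              ← inner_add_right, hx, inner_zero_right]
        have claim3 : ∀ x : W, x ∈ Submodule.map J.toLinearMap M ↔ orthProj V x + c x = 0 := by
          intro x
          rw [mem_mapJ hJskew hJunitary, hmemM (J x)]
          constructor
          · rintro ⟨v, hv⟩
            have h1 : J ((v : W)) + J ((μ v : W)) = -x := by
              have h2 : J ((v : W) + (μ v : W)) = J (J x) := congrArg J hv
              rwa [map_add, hJJ] at h2
            have hx : x = -(J ((μ v : W))) + -(J ((v : W))) := by
              have h2 : x = -(J ((v : W)) + J ((μ v : W))) := by
                rw [h1, neg_neg]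
              rw [h2]; abel
            have hPVx : orthProj V x = -(J ((μ v : W))) := by
              rw [hx]
              exact orthProj_add_of_mem hVcl (le_of_eq hVo.symm)
                (V.neg_mem (hJmemV _ (μ v).2)) (V'.neg_mem (hJmemV' _ v.2))
            have hPV'x : orthProj V' x = -(J ((v : W))) := by
              have h3 : x = -(J ((v : W))) + -(J ((μ v : W))) := by rw [hx]; abel
              rw [h3]
              exact orthProj_add_of_mem hV'cl (le_of_eq hV'o.symm)
                (V'.neg_mem (hJmemV' _ v.2)) (V.neg_mem (hJmemV _ (μ v).2))
            have hsubv : (⟨J (orthProj V' x), hJb x⟩ : ↥V) = v := by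
              apply Subtype.ext
              show J (orthProj V' x) = (v : W)
              rw [hPV'x, map_neg, hJJ, neg_neg]
            rw [hPVx]
            simp only [hc]
            rw [hsubv]
            abel
          · intro hx
            refine ⟨⟨J (orthProj V' x), hJb x⟩, ?_⟩
            have hdecomp : x = orthProj V x + orthProj V' x := by
              rw [hPV'eq]; abel
            have hPVx : orthProj V x = -(c x) := eq_neg_of_add_eq_zero_left hx
            have hJx : J x = J (orthProj V x) + J (orthProj V' x) := by
              rw [← map_add, ← hdecomp]
            rw [hJx, hPVx, map_neg]
            simp only [hc]
            rw [hJJ]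
            abel
        have hMoJM : Mᗮ = Submodule.map J.toLinearMap M := by
          ext x; rw [claim2 x, claim3 x]
        rw [hMoJM]
        exact hmapmap M
      exact ⟨hMcl, hMlag, ⟨hMΓcl, hMΓ, hMΓ'⟩, hγM⟩
  refine ⟨c1, c2, main, ?_⟩
  have graph0 : ((V : Submodule ℂ W) : Set W)
      = Set.range (fun v : ↥V => (v : W) + (((0 : ↥V →L[ℂ] ↥V') v : W))) := by
    simp only [ContinuousLinearMap.zero_apply, ZeroMemClass.coe_zero, add_zero]
    exact Subtype.range_coe.symm
  exact (main V).mpr ⟨0, ⟨graph0,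
    by intro w w' hw hw'; simp,
    by intro w hw _; simp⟩,
    fun μ' h => huniq μ' 0 (h.1.symm.trans graph0)⟩
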